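/- Work in the ring S of formal power series over ℚ in three variables u, y, t. Let F ∈ S be the series whose coefficient of u^a y^b t^n equals the number of ascent sequences of length n with a ascents and b equal pairs. For k ≥ 1 set Δ_k = (1−ty)^k(1−u) + u(1+t−ty)^k, which has constant term 1 and hence is invertible in S, and set Γ_k = u(1+t−ty)^k Δ_k^{−1}. Then F = 1 + t(1−u)Δ₁^{−1} + Σ_{n≥1} t(1−u)(1−ty)^n(1+t−ty)^n Γ₁Γ₂⋯Γ_n Δ_n^{−1}Δ_{n+1}^{−1}, where the infinite sum is defined coefficientwise (the n-th summand is divisible by u^n, so each coefficient receives only finitely many contributions). -/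

import Mathlib

/-!
Let `g x a` be the generating function of nonempty ascent sequences with `a` ascents and last
letter `x`. Appending a letter gives a linear recurrence for `g x a`; marking the last letter by
`v`, the polynomials `P a v = ∑ₓ g x a vˣ` satisfy the kernel equation
`P (a+1) v (B - A v) = u t v P a v - u t v^(a+2) G a + t G (a+1)`, where `A = 1 - t y`,
`B = 1 + t - t y` and `G a = P a 1`. At `v = V k = B Δₖ / Δₖ₊₁` the kernel is
`B - A V k = u t Z (k+1)` with `Z k = Bᵏ / Δₖ`, so substituting and summing against `Z k ^ a`
expresses `H k (M+1) = ∑_{a ≤ M} G a Z k ^ a` through `H (k+1) M`, up to a multiple of `u ^ (M+1)`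
because `u ^ a ∣ P a v`. Since `Z 0 = 1`, `H 0 (M+1)` agrees with `F - 1` in `u`-degree `≤ M`, and
iterating the relation `M` times yields the partial sum of the series.
-/

/-- Number of ascents in an integer sequence. -/
def ascList (l : List ℕ) : ℕ :=
  (List.range (l.length - 1)).countP (fun j => decide (l.getD j 0 < l.getD (j + 1) 0))

/-- Ascent sequence predicate. -/
def IsAscentSeq (l : List ℕ) : Prop :=
  l.getD 0 0 = 0 ∧ ∀ i, 0 < i → i < l.length → l.getD i 0 ≤ 1 + ascList (l.take i)

/-- Number of equal adjacent pairs. -/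
def adjpairs (l : List ℕ) : ℕ :=
  (List.range (l.length - 1)).countP (fun j => decide (l.getD j 0 = l.getD (j + 1) 0))

/-- All runs of equal consecutive letters have length at most `k`
(no `k+1` consecutive equal entries). -/
def RunsAtMost (k : ℕ) (l : List ℕ) : Prop :=
  ¬ ∃ i, i + k < l.length ∧ ∀ j ≤ k, l.getD (i + j) 0 = l.getD i 0

/-- Order-isomorphism of two partial orders on `Fin n`. -/
def PosetIso {n : ℕ} (P Q : PartialOrder (Fin n)) : Prop :=
  ∃ e : Fin n ≃ Fin n, ∀ a b, P.le a b ↔ Q.le (e a) (e b)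

/-- The setoid of partial orders on `Fin n` satisfying `Φ`, up to isomorphism. -/
def posetSetoid (n : ℕ) (Φ : PartialOrder (Fin n) → Prop) :
    Setoid {P : PartialOrder (Fin n) // Φ P} where
  r P Q := PosetIso P.1 Q.1
  iseqv := by
    constructor
    · intro P
      exact ⟨Equiv.refl _, fun a b => Iff.rfl⟩
    · rintro P Q ⟨e, he⟩
      refine ⟨e.symm, fun a b => ?_⟩
      simp only [he (e.symm a) (e.symm b), Equiv.apply_symm_apply]
    · rintro P Q R ⟨e, he⟩ ⟨f, hf⟩
      exact ⟨e.trans f, fun a b => (he a b).trans (hf (e a) (e b))⟩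

/-- The number of isomorphism classes of partial orders on `n` elements satisfying `Φ`. -/
noncomputable def posetCount (n : ℕ) (Φ : PartialOrder (Fin n) → Prop) : ℕ :=
  Nat.card (Quotient (posetSetoid n Φ))

/-- A poset is (2+2)-free. -/
def TwoTwoFree {n : ℕ} (P : PartialOrder (Fin n)) : Prop :=
  ¬ ∃ a b c d : Fin n, P.lt a b ∧ P.lt c d ∧
    ¬ P.le a c ∧ ¬ P.le c a ∧ ¬ P.le a d ∧ ¬ P.le d a ∧
    ¬ P.le b c ∧ ¬ P.le c b ∧ ¬ P.le b d ∧ ¬ P.le d b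

/-- Two elements are indistinguishable: same strict down-set and same strict up-set. -/
def Indist {n : ℕ} (P : PartialOrder (Fin n)) (x y : Fin n) : Prop :=
  (∀ z, P.lt z x ↔ P.lt z y) ∧ (∀ z, P.lt x z ↔ P.lt y z)

/-- Indistinguishability as a setoid. -/
def indistSetoid {n : ℕ} (P : PartialOrder (Fin n)) : Setoid (Fin n) where
  r := Indist P
  iseqv := ⟨fun _ => ⟨fun _ => Iff.rfl, fun _ => Iff.rfl⟩,
    fun h => ⟨fun z => (h.1 z).symm, fun z => (h.2 z).symm⟩,
    fun h h' => ⟨fun z => (h.1 z).trans (h'.1 z), fun z => (h.2 z).trans (h'.2 z)⟩⟩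

/-- Size of the indistinguishability class of `x`. -/
noncomputable def classSize {n : ℕ} (P : PartialOrder (Fin n)) (x : Fin n) : ℕ :=
  Nat.card {y : Fin n // Indist P x y}

/-- `maxindist(P) ≤ k`: each indistinguishability class has size at most `k`. -/
def MaxindistLe {n : ℕ} (P : PartialOrder (Fin n)) (k : ℕ) : Prop :=
  ∀ x : Fin n, classSize P x ≤ k

/-- No two distinct elements are indistinguishable. -/
def PrimitivePoset {n : ℕ} (P : PartialOrder (Fin n)) : Prop :=
  ∀ x y : Fin n, Indist P x y → x = y

/-- `rep(P)`: the minimum number of elements whose removal leaves an induced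
subposet with no pair of distinct indistinguishable elements. -/
noncomputable def repStat {n : ℕ} (P : PartialOrder (Fin n)) : ℕ :=
  sInf {m | ∃ S : Finset (Fin n), S.card = m ∧
    ∀ x ∉ S, ∀ y ∉ S, Indist P x y → x = y}

/-- The strict down-set of `x`. -/
def downSet {n : ℕ} (P : PartialOrder (Fin n)) (x : Fin n) : Set (Fin n) :=
  {z | P.lt z x}

/-- The level of `x`: the number of strict down-sets strictly contained in `D(x)`. -/
noncomputable def levelOf {n : ℕ} (P : PartialOrder (Fin n)) (x : Fin n) : ℕ :=
  {S : Set (Fin n) | (∃ z, S = downSet P z) ∧ S ⊂ downSet P x}.ncard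

/-- `levels(P)`: index of the highest level. -/
noncomputable def levelsStat {n : ℕ} (P : PartialOrder (Fin n)) : ℕ :=
  {S : Set (Fin n) | ∃ z, S = downSet P z}.ncard - 1

/-- `x` is a maximal element. -/
def IsMaximal {n : ℕ} (P : PartialOrder (Fin n)) (x : Fin n) : Prop :=
  ∀ z, ¬ P.lt x z

/-- `minmax(P)`: the minimum level of a maximal element. -/
noncomputable def minmaxStat {n : ℕ} (P : PartialOrder (Fin n)) : ℕ :=
  sInf {j | ∃ x, IsMaximal P x ∧ levelOf P x = j}

/-- Membership in `M_n`: upper triangular, no zero row or column, entries sum to `n`. -/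
def InMatM (n : ℕ) (A : Σ d : ℕ, Matrix (Fin d) (Fin d) ℕ) : Prop :=
  (∀ i j : Fin A.1, (j : ℕ) < (i : ℕ) → A.2 i j = 0) ∧
  (∀ i : Fin A.1, ∃ j, A.2 i j ≠ 0) ∧
  (∀ j : Fin A.1, ∃ i, A.2 i j ≠ 0) ∧
  (∑ i, ∑ j, A.2 i j) = n

/-- All entries are at most `k`. -/
def EntriesLe (k : ℕ) (A : Σ d : ℕ, Matrix (Fin d) (Fin d) ℕ) : Prop :=
  ∀ i j, A.2 i j ≤ k

/-- `index(A) - 1`: the least (0-based) row index with a nonzero entry in the last column. -/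
noncomputable def matIndex0 (A : Σ d : ℕ, Matrix (Fin d) (Fin d) ℕ) : ℕ :=
  sInf {i : ℕ | ∃ (h : i < A.1) (h' : A.1 - 1 < A.1), A.2 ⟨i, h⟩ ⟨A.1 - 1, h'⟩ ≠ 0}

/-- The number of nonzero entries of `A`. -/
noncomputable def matNZ (A : Σ d : ℕ, Matrix (Fin d) (Fin d) ℕ) : ℕ :=
  Nat.card {p : Fin A.1 × Fin A.1 // A.2 p.1 p.2 ≠ 0}

/-- Membership in `R_n`. -/
def InRset {n : ℕ} (π : Equiv.Perm (Fin n)) : Prop :=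
  ¬ ∃ i j k : Fin n, (j : ℕ) = (i : ℕ) + 1 ∧ (i : ℕ) + 1 < (k : ℕ) ∧
    (π k : ℕ) < (π i : ℕ) ∧ (π i : ℕ) < (π j : ℕ) ∧ (π i : ℕ) = (π k : ℕ) + 1

/-- No `k+1` consecutive letters, each one less than the previous. -/
def NoDescRun {n : ℕ} (k : ℕ) (π : Equiv.Perm (Fin n)) : Prop :=
  ¬ ∃ (i : ℕ) (h : i + k < n), ∀ j, ∀ hj : j ≤ k,
    (π ⟨i + j, by omega⟩ : ℕ) = (π ⟨i, by omega⟩ : ℕ) - j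

/-- The number of descents by one: indices `i` with `π_i = π_{i+1} + 1`. -/
noncomputable def adjdes {n : ℕ} (π : Equiv.Perm (Fin n)) : ℕ :=
  Nat.card {i : ℕ // ∃ h : i + 1 < n,
    (π ⟨i, Nat.lt_of_succ_lt h⟩ : ℕ) = (π ⟨i + 1, h⟩ : ℕ) + 1}

/-- A perfect matching, encoded as a fixed-point-free involution. -/
def IsMatching {m : ℕ} (f : Equiv.Perm (Fin m)) : Prop :=
  (∀ x, f (f x) = x) ∧ ∀ x, f x ≠ x

/-- The Stoimenow condition on a matching. -/
def IsStoimenow {m : ℕ} (f : Equiv.Perm (Fin m)) : Prop :=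
  ¬ ∃ a c : Fin m, a < f a ∧ c < f c ∧
    (((a : ℕ) = (c : ℕ) + 1 ∧ f a < f c) ∨ ((a : ℕ) < (c : ℕ) ∧ (f a : ℕ) = (f c : ℕ) + 1))

/-- There are `i, j` such that `{i+l, j+l}` is an arc for every `l = 0, …, k`. -/
def HasSimRun {m : ℕ} (k : ℕ) (f : Equiv.Perm (Fin m)) : Prop :=
  ∃ i j : ℕ, ∀ l ≤ k, ∃ (h1 : i + l < m) (h2 : j + l < m), f ⟨i + l, h1⟩ = ⟨j + l, h2⟩

/-- After removing the arcs with endpoints in `A`, no pair of similar arcs remains. -/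
def SimilarFree {m : ℕ} (f : Equiv.Perm (Fin m)) (A : Finset (Fin m)) : Prop :=
  ¬ ∃ (i j : ℕ) (h1 : i < m) (h2 : j < m) (h3 : i + 1 < m) (h4 : j + 1 < m),
    f ⟨i, h1⟩ = ⟨j, h2⟩ ∧ f ⟨i + 1, h3⟩ = ⟨j + 1, h4⟩ ∧
    (⟨i, h1⟩ : Fin m) ∉ A ∧ (⟨i + 1, h3⟩ : Fin m) ∉ A ∧
    (⟨j, h2⟩ : Fin m) ∉ A ∧ (⟨j + 1, h4⟩ : Fin m) ∉ A

/-- `echords(M)`: minimum number of arcs whose removal leaves no similar pair. -/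
noncomputable def echords {m : ℕ} (f : Equiv.Perm (Fin m)) : ℕ :=
  sInf {c | ∃ A : Finset (Fin m), (∀ x ∈ A, f x ∈ A) ∧ A.card = 2 * c ∧ SimilarFree f A}


namespace Stmt9

/-- `u`, `y`, `t` in `S = ℚ⟦u,y,t⟧`. -/
noncomputable def u : MvPowerSeries (Fin 3) ℚ := MvPowerSeries.X 0
noncomputable def y : MvPowerSeries (Fin 3) ℚ := MvPowerSeries.X 1
noncomputable def t : MvPowerSeries (Fin 3) ℚ := MvPowerSeries.X 2

/-- `F`: the coefficient of `u^a y^b t^n` is the number of ascent sequences of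
length `n` with `a` ascents and `b` equal pairs. -/
noncomputable def F : MvPowerSeries (Fin 3) ℚ := fun m =>
  (Nat.card {l : List ℕ // l.length = m 2 ∧ IsAscentSeq l ∧
    ascList l = m 0 ∧ adjpairs l = m 1} : ℚ)

noncomputable def Δ (k : ℕ) : MvPowerSeries (Fin 3) ℚ :=
  (1 - t * y) ^ k * (1 - u) + u * (1 + t - t * y) ^ k

noncomputable def Γ (k : ℕ) : MvPowerSeries (Fin 3) ℚ :=
  u * (1 + t - t * y) ^ k * (Δ k)⁻¹

open Finset MvPowerSeries

def countAdjacent (r : ℕ → ℕ → Prop) [DecidableRel r] (l : List ℕ) : ℕ :=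
  (List.range (l.length - 1)).countP fun j => decide (r (l.getD j 0) (l.getD (j + 1) 0))

theorem getD_length_sub_one {α : Type*} (l : List α) (d : α) :
    l.getD (l.length - 1) d = l.getLastD d := by
  rcases List.eq_nil_or_concat' l with rfl | ⟨l', x, rfl⟩
  · rfl
  · simp

theorem countAdjacent_append_singleton (r : ℕ → ℕ → Prop) [DecidableRel r] {l : List ℕ}
    (hl : l ≠ []) (x : ℕ) :
    countAdjacent r (l ++ [x]) = countAdjacent r l + if r (l.getLastD 0) x then 1 else 0 := by
  have hpos := List.length_pos_iff.mpr hl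
  have hlen : (l ++ [x]).length - 1 = (l.length - 1) + 1 := by
    simp only [List.length_append, List.length_singleton]
    omega
  unfold countAdjacent
  rw [hlen, List.range_succ, List.countP_append]
  congr 1
  · refine List.countP_congr fun j hj => ?_
    have := List.mem_range.mp hj
    rw [List.getD_append _ _ _ _ (by omega), List.getD_append _ _ _ _ (by omega)]
  · have hx : (l ++ [x]).getD (l.length - 1 + 1) 0 = x := by
      rw [Nat.sub_add_cancel hpos]
      simp
    have hl' : (l ++ [x]).getD (l.length - 1) 0 = l.getLastD 0 := by
      rw [List.getD_append _ _ _ _ (by omega), getD_length_sub_one]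
    simp only [List.countP_cons, List.countP_nil, hl', hx, decide_eq_true_eq, zero_add]

theorem ascList_append_singleton {l : List ℕ} (hl : l ≠ []) (x : ℕ) :
    ascList (l ++ [x]) = ascList l + if l.getLastD 0 < x then 1 else 0 :=
  countAdjacent_append_singleton _ hl x

theorem adjpairs_append_singleton {l : List ℕ} (hl : l ≠ []) (x : ℕ) :
    adjpairs (l ++ [x]) = adjpairs l + if l.getLastD 0 = x then 1 else 0 :=
  countAdjacent_append_singleton _ hl x

theorem isAscentSeq_singleton (x : ℕ) : IsAscentSeq [x] ↔ x = 0 :=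
  ⟨fun h => by simpa using h.1,
    fun h => ⟨by simp [h], fun i hi hil => by simp at hil; omega⟩⟩

theorem isAscentSeq_append_singleton {l : List ℕ} (hl : l ≠ []) (x : ℕ) :
    IsAscentSeq (l ++ [x]) ↔ IsAscentSeq l ∧ x ≤ 1 + ascList l := by
  have hlen := List.length_pos_iff.mpr hl
  have hlast : (l ++ [x]).getD l.length 0 = x ∧ (l ++ [x]).take l.length = l := by simp
  have hinit : ∀ i < l.length,
      (l ++ [x]).getD i 0 = l.getD i 0 ∧ (l ++ [x]).take i = l.take i :=
    fun i hi => ⟨List.getD_append _ _ _ _ hi, List.take_append_of_le_length hi.le⟩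
  constructor
  · rintro ⟨h0, hi⟩
    refine ⟨⟨by rwa [(hinit 0 hlen).1] at h0, fun i hi0 hil => ?_⟩, ?_⟩
    · simpa only [hinit i hil] using hi i hi0 (by simp; omega)
    · simpa only [hlast] using hi l.length hlen (by simp)
  · rintro ⟨⟨h0, hi⟩, hx⟩
    refine ⟨by rwa [(hinit 0 hlen).1], fun i hi0 hil => ?_⟩
    rcases Nat.lt_or_ge i l.length with hil' | hil'
    · simpa only [hinit i hil'] using hi i hi0 hil'
    · obtain rfl : i = l.length := by simp at hil; omega
      simpa only [hlast] using hx

theorem getLastD_le_ascList {l : List ℕ} (hl : IsAscentSeq l) : l.getLastD 0 ≤ ascList l := by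
  induction l using List.reverseRecOn with
  | nil => simp
  | append_singleton l x ih =>
    rcases eq_or_ne l [] with rfl | hne
    · simp [(isAscentSeq_singleton x).mp hl]
    · obtain ⟨hl, hx⟩ := (isAscentSeq_append_singleton hne x).mp hl
      have := ih hl
      rw [List.getLastD_concat, ascList_append_singleton hne]
      split_ifs <;> omega

def ascentSeqs : ℕ → Finset (List ℕ)
  | 0 => {[]}
  | 1 => {[0]}
  | n + 2 => (ascentSeqs (n + 1)).biUnion fun l => (range (ascList l + 2)).image (l ++ [·])

theorem mem_ascentSeqs {n : ℕ} {l : List ℕ} :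
    l ∈ ascentSeqs n ↔ l.length = n ∧ IsAscentSeq l := by
  induction n using Nat.strong_induction_on generalizing l with
  | _ n ih =>
    match n with
    | 0 =>
      simp only [ascentSeqs, mem_singleton, List.length_eq_zero_iff, iff_self_and]
      rintro rfl
      exact ⟨rfl, fun i _ hi => absurd hi (Nat.not_lt_zero i)⟩
    | 1 =>
      simp only [ascentSeqs, mem_singleton, List.length_eq_one_iff]
      constructor
      · rintro rfl
        exact ⟨⟨0, rfl⟩, (isAscentSeq_singleton 0).mpr rfl⟩
      · rintro ⟨⟨x, rfl⟩, h⟩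
        rw [(isAscentSeq_singleton x).mp h]
    | n + 2 =>
      simp only [ascentSeqs, mem_biUnion, mem_image, mem_range, ih (n + 1) (by omega)]
      constructor
      · rintro ⟨l', ⟨hlen, hl'⟩, x, hx, rfl⟩
        have hne : l' ≠ [] := List.ne_nil_of_length_pos (by omega)
        exact ⟨by simp [hlen], (isAscentSeq_append_singleton hne x).mpr ⟨hl', by omega⟩⟩
      · rintro ⟨hlen, hl⟩
        obtain ⟨l', x, rfl⟩ := (List.eq_nil_or_concat' l).resolve_left
          (List.ne_nil_of_length_pos (by omega))
        have hne : l' ≠ [] := List.ne_nil_of_length_pos (by simp at hlen; omega)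
        obtain ⟨hl', hx⟩ := (isAscentSeq_append_singleton hne x).mp hl
        exact ⟨l', ⟨by simpa using hlen, hl'⟩, x, by omega, rfl⟩

theorem card_filter_ascentSeqs_add_two (p : List ℕ → Prop) [DecidablePred p] (n : ℕ) :
    #{l ∈ ascentSeqs (n + 2) | p l} =
      ∑ l ∈ ascentSeqs (n + 1), #{x ∈ range (ascList l + 2) | p (l ++ [x])} := by
  rw [ascentSeqs, filter_biUnion, card_biUnion]
  · refine sum_congr rfl fun l _ => ?_
    rw [filter_image, card_image_of_injective _ fun _ _ h => by simpa using h]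
  · intro l₁ h₁ l₂ h₂ hne
    simp only [Function.onFun, disjoint_left, mem_filter, mem_image]
    rintro _ ⟨⟨x₁, -, rfl⟩, -⟩ ⟨⟨x₂, -, heq⟩, -⟩
    have hlen : l₂.length = l₁.length := by
      rw [(mem_ascentSeqs.mp h₁).1, (mem_ascentSeqs.mp h₂).1]
    exact hne (List.append_inj heq hlen).1.symm

theorem card_filter_and_eq {α : Type*} [DecidableEq α] {s : Finset α} {p : α → Prop}
    [DecidablePred p] {x : α} :
    #{x' ∈ s | p x' ∧ x' = x} = if x ∈ s ∧ p x then 1 else 0 := by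
  split_ifs with h
  · exact card_eq_one.mpr ⟨x, by ext; grind⟩
  · exact card_eq_zero.mpr (filter_eq_empty_iff.mpr (by grind))

def ascCount (x a b n : ℕ) : ℕ :=
  #{l ∈ ascentSeqs n | (l ≠ [] ∧ ascList l = a ∧ adjpairs l = b) ∧ l.getLastD 0 = x}

theorem sum_ascCount (s : Finset ℕ) (a b n : ℕ) :
    ∑ x ∈ s, ascCount x a b n =
      #{l ∈ ascentSeqs n |
        (l ≠ [] ∧ ascList l = a ∧ adjpairs l = b) ∧ l.getLastD 0 ∈ s} := by
  rw [← filter_filter, ← sum_card_fiberwise_eq_card_filter]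
  simp only [ascCount, filter_filter]

theorem ascCount_zero (x a b : ℕ) : ascCount x a b 0 = 0 := by
  simp [ascCount, ascentSeqs]

theorem ascCount_one (x a b : ℕ) :
    ascCount x a b 1 = if x = 0 ∧ a = 0 ∧ b = 0 then 1 else 0 := by
  by_cases h : x = 0 ∧ a = 0 ∧ b = 0
  · obtain ⟨rfl, rfl, rfl⟩ := h
    decide
  · have hasc : ascList [0] = 0 := rfl
    have hadj : adjpairs [0] = 0 := rfl
    simp [ascCount, ascentSeqs, filter_singleton, hasc, hadj, h]
    tauto

/-- Appending `x` to a sequence ending in `x'` creates an equal pair, an ascent or neither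
according as `x' = x`, `x' < x` or `x < x'`. -/
theorem ascCount_add_two {x a : ℕ} (hxa : x ≤ a) (b n : ℕ) :
    ascCount x a b (n + 2) = (if b = 0 then 0 else ascCount x a (b - 1) (n + 1)) +
      ∑ x' ∈ range x, ascCount x' (a - 1) b (n + 1) +
      ∑ x' ∈ Ioc x a, ascCount x' a b (n + 1) := by
  have hb : (if b = 0 then 0 else ascCount x a (b - 1) (n + 1)) =
      #{l ∈ ascentSeqs (n + 1) |
        b ≠ 0 ∧ (l ≠ [] ∧ ascList l = a ∧ adjpairs l = b - 1) ∧ l.getLastD 0 = x} := by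
    split_ifs with h <;> simp [ascCount, h]
  rw [ascCount, card_filter_ascentSeqs_add_two, hb, sum_ascCount, sum_ascCount]
  simp only [List.getLastD_concat, card_filter_and_eq]
  simp only [card_filter, ← sum_add_distrib]
  refine sum_congr rfl fun l hl => ?_
  have hne : l ≠ [] := List.ne_nil_of_length_pos (by rw [(mem_ascentSeqs.mp hl).1]; omega)
  have hlast := getLastD_le_ascList (mem_ascentSeqs.mp hl).2
  simp only [ascList_append_singleton hne, adjpairs_append_singleton hne, ne_eq,
    List.append_eq_nil_iff, List.cons_ne_nil, and_false, not_false_eq_true, true_and, hne,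
    mem_range, mem_Ioc]
  split_ifs <;> omega

theorem ascCount_succ {x a : ℕ} (hxa : x ≤ a) (b n : ℕ) :
    ascCount x a b (n + 1) = (if n = 0 ∧ x = 0 ∧ a = 0 ∧ b = 0 then 1 else 0) +
      (if b = 0 then 0 else ascCount x a (b - 1) n) +
      ∑ x' ∈ range x, ascCount x' (a - 1) b n + ∑ x' ∈ Ioc x a, ascCount x' a b n := by
  rcases n with _ | n
  · simp [ascCount_one, ascCount_zero]
  · simp [ascCount_add_two hxa]

def ofCoeff3 (c : ℕ → ℕ → ℕ → ℚ) : MvPowerSeries (Fin 3) ℚ :=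
  fun m => c (m 0) (m 1) (m 2)

theorem coeff_ofCoeff3 (c : ℕ → ℕ → ℕ → ℚ) (m : Fin 3 →₀ ℕ) :
    coeff m (ofCoeff3 c) = c (m 0) (m 1) (m 2) := rfl

theorem ofCoeff3_add (c d : ℕ → ℕ → ℕ → ℚ) :
    ofCoeff3 c + ofCoeff3 d = ofCoeff3 fun a b n => c a b n + d a b n := rfl

theorem ofCoeff3_sum {ι : Type*} (s : Finset ι) (c : ι → ℕ → ℕ → ℕ → ℚ) :
    ∑ i ∈ s, ofCoeff3 (c i) = ofCoeff3 fun a b n => ∑ i ∈ s, c i a b n := by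
  ext m
  simp [coeff_ofCoeff3]

theorem coeff_X_mul {σ R : Type*} [CommSemiring R] [DecidableEq σ] (i : σ)
    (f : MvPowerSeries σ R) (m : σ →₀ ℕ) :
    coeff m (X i * f) = if m i = 0 then 0 else coeff (m - Finsupp.single i 1) f := by
  rw [X, coeff_monomial_mul, one_mul]
  by_cases h : m i = 0 <;> simp [h, Finsupp.single_le_iff, Nat.one_le_iff_ne_zero]

theorem u_mul_ofCoeff3 (c : ℕ → ℕ → ℕ → ℚ) :
    u * ofCoeff3 c = ofCoeff3 fun a b n => if a = 0 then 0 else c (a - 1) b n := by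
  ext m
  simp [u, coeff_X_mul, coeff_ofCoeff3]

theorem y_mul_ofCoeff3 (c : ℕ → ℕ → ℕ → ℚ) :
    y * ofCoeff3 c = ofCoeff3 fun a b n => if b = 0 then 0 else c a (b - 1) n := by
  ext m
  simp [y, coeff_X_mul, coeff_ofCoeff3]

theorem t_mul_ofCoeff3 (c : ℕ → ℕ → ℕ → ℚ) :
    t * ofCoeff3 c = ofCoeff3 fun a b n => if n = 0 then 0 else c a b (n - 1) := by
  ext m
  simp [t, coeff_X_mul, coeff_ofCoeff3]

theorem finsupp_eq_zero_iff (m : Fin 3 →₀ ℕ) : m = 0 ↔ m 0 = 0 ∧ m 1 = 0 ∧ m 2 = 0 := by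
  simp [Finsupp.ext_iff, Fin.forall_fin_succ]

theorem one_eq_ofCoeff3 :
    (1 : MvPowerSeries (Fin 3) ℚ) =
      ofCoeff3 fun a b n => if a = 0 ∧ b = 0 ∧ n = 0 then 1 else 0 := by
  ext m
  rw [coeff_one]
  exact if_congr (finsupp_eq_zero_iff m) rfl rfl

theorem t_eq_ofCoeff3 : t = ofCoeff3 fun a b n => if a = 0 ∧ b = 0 ∧ n = 1 then 1 else 0 := by
  rw [← mul_one t, one_eq_ofCoeff3, t_mul_ofCoeff3]
  congr 1
  funext a b n
  rcases n with _ | _ | n <;> simp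

noncomputable def g (x a : ℕ) : MvPowerSeries (Fin 3) ℚ :=
  ofCoeff3 fun a' b n => if a' = a then (ascCount x a b n : ℚ) else 0

theorem g_eq {x a : ℕ} (hxa : x ≤ a) :
    g x a = (if x = 0 ∧ a = 0 then t else 0) + t * (y * g x a) +
      u * (t * ∑ x' ∈ range x, g x' (a - 1)) + t * ∑ x' ∈ Ioc x a, g x' a := by
  have ht : (if x = 0 ∧ a = 0 then t else 0) =
      ofCoeff3 fun a' b n => if x = 0 ∧ a = 0 ∧ a' = 0 ∧ b = 0 ∧ n = 1 then 1 else 0 := by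
    split_ifs with h
    · simp [t_eq_ofCoeff3, h]
    · ext m
      rw [coeff_ofCoeff3, if_neg fun h' => h ⟨h'.1, h'.2.1⟩, map_zero]
  simp only [g, ht, ofCoeff3_sum, u_mul_ofCoeff3, y_mul_ofCoeff3, t_mul_ofCoeff3, ofCoeff3_add]
  congr 1
  funext a' b n
  rcases n with _ | n
  · simp [ascCount_zero]
  · simp only [ascCount_succ hxa, Nat.add_sub_cancel, Nat.add_one_ne_zero, if_false]
    by_cases ha : a' = a
    · subst ha
      obtain rfl | ha0 := eq_or_ne a' 0
      · obtain rfl : x = 0 := by omega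
        simp [and_comm]
      · simp [ha0]
    · have hascent : (if a' = 0 then 0 else
          ∑ x' ∈ range x, if a' - 1 = a - 1 then (ascCount x' (a - 1) b n : ℚ) else 0) =
          0 := by
        refine ite_eq_left_iff.mpr fun ha0 => sum_eq_zero fun x' hx' => if_neg ?_
        have := mem_range.mp hx'
        omega
      rw [hascent]
      simp [ha]
      omega

noncomputable def A : MvPowerSeries (Fin 3) ℚ := 1 - t * y

noncomputable def B : MvPowerSeries (Fin 3) ℚ := 1 + t - t * y

theorem B_eq : B = A + t := by
  rw [A, B]
  ring

noncomputable def P (a : ℕ) (v : MvPowerSeries (Fin 3) ℚ) : MvPowerSeries (Fin 3) ℚ :=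
  ∑ x ∈ range (a + 1), g x a * v ^ x

noncomputable def G (a : ℕ) : MvPowerSeries (Fin 3) ℚ :=
  ∑ x ∈ range (a + 1), g x a

theorem A_mul_g_zero_zero : A * g 0 0 = t := by
  have h := g_eq (le_refl 0)
  simp only [range_zero, sum_empty, Ioc_self, and_self, if_true, mul_zero, add_zero] at h
  rw [A]
  linear_combination h

theorem P_zero_mul_kernel (v : MvPowerSeries (Fin 3) ℚ) :
    P 0 v * (B - A * v) = t * (1 - v) + t * G 0 := by
  simp only [P, G, zero_add, range_one, sum_singleton, pow_zero, mul_one]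
  linear_combination (1 - v) * A_mul_g_zero_zero + g 0 0 * B_eq

theorem A_mul_g_succ {x a : ℕ} (hxa : x ≤ a + 1) :
    A * g x (a + 1) =
      u * t * ∑ x' ∈ range x, g x' a + t * ∑ x' ∈ Ioc x (a + 1), g x' (a + 1) := by
  have h := g_eq hxa
  rw [if_neg (by omega), Nat.add_sub_cancel] at h
  rw [A]
  linear_combination h

theorem sum_range_sum_range_mul_pow {R : Type*} [CommSemiring R] (f : ℕ → R) (v : R) (a : ℕ) :
    ∑ x ∈ range (a + 2), ∑ x' ∈ range x, f x' * v ^ x =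
      ∑ x' ∈ range (a + 1), f x' * ∑ x ∈ Ico (x' + 1) (a + 2), v ^ x := by
  simp only [mul_sum]
  refine sum_comm' fun x x' => ?_
  simp only [mem_range, mem_Ico]
  omega

theorem sum_range_sum_Ioc_mul_pow {R : Type*} [CommSemiring R] (f : ℕ → R) (v : R) (a : ℕ) :
    ∑ x ∈ range (a + 2), ∑ x' ∈ Ioc x (a + 1), f x' * v ^ x =
      ∑ x' ∈ range (a + 2), f x' * ∑ x ∈ range x', v ^ x := by
  simp only [mul_sum]
  refine sum_comm' fun x x' => ?_
  simp only [mem_range, mem_Ioc]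
  omega

/-- Multiplying the recurrence `A_mul_g_succ` by `v ^ x` and summing over `x` turns the
sums over `x' < x` and `x' > x` into geometric sums in `v`. -/
theorem one_sub_mul_A_mul_P_succ (a : ℕ) (v : MvPowerSeries (Fin 3) ℚ) :
    (1 - v) * (A * P (a + 1) v) =
      u * t * (v * P a v - v ^ (a + 2) * G a) + t * (G (a + 1) - P (a + 1) v) := by
  have hsplit : A * P (a + 1) v =
      u * t * ∑ x' ∈ range (a + 1), g x' a * ∑ x ∈ Ico (x' + 1) (a + 2), v ^ x +
        t * ∑ x' ∈ range (a + 2), g x' (a + 1) * ∑ x ∈ range x', v ^ x := by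
    rw [← sum_range_sum_range_mul_pow (g · a), ← sum_range_sum_Ioc_mul_pow (g · (a + 1)), P,
      mul_sum, mul_sum, mul_sum, ← sum_add_distrib]
    refine sum_congr rfl fun x hx => ?_
    rw [← mul_assoc, A_mul_g_succ (by have := mem_range.mp hx; omega), ← sum_mul, ← sum_mul]
    ring
  have hascent :
      (1 - v) * ∑ x' ∈ range (a + 1), g x' a * ∑ x ∈ Ico (x' + 1) (a + 2), v ^ x =
      v * P a v - v ^ (a + 2) * G a := by
    rw [P, G, mul_sum, mul_sum, mul_sum, ← sum_sub_distrib]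
    refine sum_congr rfl fun x' hx' => ?_
    have := mem_range.mp hx'
    rw [mul_left_comm, mul_comm (1 - v), geom_sum_Ico_mul_neg _ (by omega)]
    ring
  have hdescent : (1 - v) * ∑ x' ∈ range (a + 2), g x' (a + 1) * ∑ x ∈ range x', v ^ x =
      G (a + 1) - P (a + 1) v := by
    rw [P, G, mul_sum, ← sum_sub_distrib]
    refine sum_congr rfl fun x' _ => ?_
    rw [mul_left_comm, mul_comm (1 - v), geom_sum_mul_neg]
    ring
  rw [hsplit]
  linear_combination u * t * hascent + t * hdescent

theorem P_succ_mul_kernel (a : ℕ) (v : MvPowerSeries (Fin 3) ℚ) :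
    P (a + 1) v * (B - A * v) = u * t * v * P a v - u * t * v ^ (a + 2) * G a + t * G (a + 1) := by
  linear_combination one_sub_mul_A_mul_P_succ a v + P (a + 1) v * B_eq

theorem Δ_eq (k : ℕ) : Δ k = A ^ k * (1 - u) + u * B ^ k := rfl

theorem Δ_zero : Δ 0 = 1 := by
  simp [Δ]

theorem Δ_succ (k : ℕ) : Δ (k + 1) = A * Δ k + u * t * B ^ k := by
  rw [Δ_eq, Δ_eq, B_eq]
  ring

theorem constantCoeff_Δ (k : ℕ) : constantCoeff (Δ k) = 1 := by
  simp [Δ, u, y, t]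

theorem Δ_mul_inv (k : ℕ) : Δ k * (Δ k)⁻¹ = 1 :=
  MvPowerSeries.mul_inv_cancel _ (by rw [constantCoeff_Δ]; exact one_ne_zero)

theorem Γ_eq (k : ℕ) : Γ k = u * B ^ k * (Δ k)⁻¹ := rfl

noncomputable def Z (k : ℕ) : MvPowerSeries (Fin 3) ℚ := B ^ k * (Δ k)⁻¹

noncomputable def V (k : ℕ) : MvPowerSeries (Fin 3) ℚ := B * Δ k * (Δ (k + 1))⁻¹

theorem Z_zero : Z 0 = 1 := by
  rw [Z, Δ_zero, pow_zero, inv_one, one_mul]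

theorem V_mul_Z (k : ℕ) : V k * Z k = Z (k + 1) := by
  rw [V, Z, Z]
  linear_combination B ^ (k + 1) * (Δ (k + 1))⁻¹ * Δ_mul_inv k

theorem B_sub_A_mul_V (k : ℕ) : B - A * V k = u * t * Z (k + 1) := by
  rw [V, Z]
  linear_combination -B * Δ_mul_inv (k + 1) + B * (Δ (k + 1))⁻¹ * Δ_succ k

theorem V_sub_one (k : ℕ) : V k - 1 = t * (1 - u) * A ^ k * (Δ (k + 1))⁻¹ := by
  have h : Δ (k + 1) = B * Δ k - t * (1 - u) * A ^ k := by
    linear_combination Δ_succ k - Δ k * B_eq - t * Δ_eq k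
  rw [V]
  linear_combination Δ_mul_inv (k + 1) - (Δ (k + 1))⁻¹ * h

theorem t_ne_zero : t ≠ 0 := fun h => by
  simpa [t] using congrArg (coeff (Finsupp.single 2 1)) h

theorem t_mul_G_zero (k : ℕ) :
    t * G 0 = u * t * V k * P 0 (V k) * Z k - t * (1 - V k) := by
  linear_combination -P_zero_mul_kernel (V k) + P 0 (V k) * B_sub_A_mul_V k -
    u * t * P 0 (V k) * V_mul_Z k

/-- The first two terms on the right telescope when summed over `a`. -/
theorem t_mul_G_succ_mul_pow (k a : ℕ) :
    t * (G (a + 1) * Z k ^ (a + 1)) =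
      u * t * V k * P (a + 1) (V k) * Z k ^ (a + 2) - u * t * V k * P a (V k) * Z k ^ (a + 1) +
        u * t * V k ^ 2 * Z k * (G a * Z (k + 1) ^ a) := by
  rw [← V_mul_Z, mul_pow]
  linear_combination -Z k ^ (a + 1) * P_succ_mul_kernel a (V k) +
    P (a + 1) (V k) * Z k ^ (a + 1) * B_sub_A_mul_V k -
    u * t * P (a + 1) (V k) * Z k ^ (a + 1) * V_mul_Z k

noncomputable def H (k M : ℕ) : MvPowerSeries (Fin 3) ℚ := ∑ a ∈ range M, G a * Z k ^ a

theorem H_succ (k M : ℕ) :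
    H k (M + 1) = (V k - 1) + u * V k ^ 2 * Z k * H (k + 1) M +
      u * V k * Z k ^ (M + 1) * P M (V k) := by
  refine mul_left_cancel₀ t_ne_zero ?_
  have htelescope := sum_range_sub (fun a => u * t * V k * P a (V k) * Z k ^ (a + 1)) M
  rw [H, sum_range_succ', mul_add, mul_sum, sum_congr rfl fun a _ => t_mul_G_succ_mul_pow k a,
    sum_add_distrib, htelescope, ← mul_sum, pow_zero, mul_one, t_mul_G_zero k, H]
  ring

theorem u_pow_dvd_g (x a : ℕ) : u ^ a ∣ g x a :=
  X_pow_dvd_iff.mpr fun m hm => by rw [g, coeff_ofCoeff3, if_neg (by omega)]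

theorem u_pow_dvd_P (a : ℕ) (v : MvPowerSeries (Fin 3) ℚ) : u ^ a ∣ P a v :=
  dvd_sum fun x _ => dvd_mul_of_dvd_left (u_pow_dvd_g x a) _

noncomputable def W (k n : ℕ) : MvPowerSeries (Fin 3) ℚ :=
  ∏ j ∈ range n, u * V (k + j) ^ 2 * Z (k + j)

noncomputable def S (k M : ℕ) : MvPowerSeries (Fin 3) ℚ :=
  ∑ n ∈ range M, W k n * (V (k + n) - 1)

theorem S_succ (k M : ℕ) : S k (M + 1) = (V k - 1) + u * V k ^ 2 * Z k * S (k + 1) M := by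
  have hW : ∀ n, W k (n + 1) = u * V k ^ 2 * Z k * W (k + 1) n := fun n => by
    simp only [W, prod_range_succ', add_zero, ← add_assoc, add_right_comm k _ 1, mul_comm]
  rw [S, sum_range_succ', W, prod_range_zero, one_mul, add_zero, add_comm, S, mul_sum]
  congr 1
  refine sum_congr rfl fun n _ => ?_
  rw [hW, show k + (n + 1) = k + 1 + n by omega]
  ring

theorem u_pow_dvd_H_sub_S (M : ℕ) : ∀ k, u ^ M ∣ H k M - S k M := by
  induction M with
  | zero => simp [H, S]
  | succ M ih =>
    intro k
    have h : H k (M + 1) - S k (M + 1) =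
        u * (V k ^ 2 * Z k * (H (k + 1) M - S (k + 1) M)) +
          u * (V k * Z k ^ (M + 1) * P M (V k)) := by
      rw [H_succ, S_succ]
      ring
    rw [h, pow_succ']
    exact dvd_add (mul_dvd_mul_left _ (dvd_mul_of_dvd_right (ih (k + 1)) _))
      (mul_dvd_mul_left _ (dvd_mul_of_dvd_right (u_pow_dvd_P M _) _))

theorem W_zero (n : ℕ) : W 0 n = Z n * ∏ i ∈ Icc 1 n, Γ i := by
  induction n with
  | zero => simp [W, Z_zero]
  | succ n ih =>
    have hΓ : Γ (n + 1) = u * (V n * Z n) := by rw [V_mul_Z, Γ_eq, Z, mul_assoc]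
    rw [W, prod_range_succ, ← W, ih, prod_Icc_succ_top (by omega), hΓ, ← V_mul_Z, zero_add]
    ring

theorem one_add_S_zero (N : ℕ) :
    1 + S 0 (N + 1) = 1 + t * (1 - u) * (Δ 1)⁻¹ +
      ∑ n ∈ Icc 1 N, t * (1 - u) * (1 - t * y) ^ n * (1 + t - t * y) ^ n *
        (∏ i ∈ Icc 1 n, Γ i) * (Δ n)⁻¹ * (Δ (n + 1))⁻¹ := by
  rw [S, range_eq_Ico, sum_eq_sum_Ico_succ_bot (by omega), Ico_add_one_right_eq_Icc, add_assoc]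
  congr 2
  · simp [W, V_sub_one]
  · refine sum_congr rfl fun n _ => ?_
    rw [zero_add, W_zero, V_sub_one, Z, A, B]
    ring

theorem G_eq (a : ℕ) : G a = ofCoeff3 fun a' b n => if a' = a then
    (#{l ∈ ascentSeqs n | l ≠ [] ∧ ascList l = a ∧ adjpairs l = b} : ℚ) else 0 := by
  simp only [G, g, ofCoeff3_sum]
  congr 1
  funext a' b n
  split_ifs with ha
  · rw [← Nat.cast_sum, sum_ascCount]
    congr 2
    refine filter_congr fun l hl => ?_
    refine ⟨And.left, fun h => ⟨h, mem_range.mpr ?_⟩⟩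
    have := getLastD_le_ascList (mem_ascentSeqs.mp hl).2
    omega
  · simp

theorem F_eq : F = ofCoeff3 fun a b n =>
    (#{l ∈ ascentSeqs n | ascList l = a ∧ adjpairs l = b} : ℚ) := by
  ext m
  rw [coeff_ofCoeff3, ← Nat.card_eq_finsetCard]
  refine congrArg Nat.cast (Nat.card_congr (Equiv.subtypeEquivRight fun l => ?_))
  simp only [mem_filter, mem_ascentSeqs, and_assoc]

theorem card_filter_ascentSeqs (a b n : ℕ) :
    #{l ∈ ascentSeqs n | ascList l = a ∧ adjpairs l = b} =
      (if a = 0 ∧ b = 0 ∧ n = 0 then 1 else 0) +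
        #{l ∈ ascentSeqs n | l ≠ [] ∧ ascList l = a ∧ adjpairs l = b} := by
  rcases n with _ | n
  · have hasc : ascList [] = 0 := rfl
    have hadj : adjpairs [] = 0 := rfl
    by_cases h : a = 0 ∧ b = 0
    · simp [ascentSeqs, filter_singleton, hasc, hadj, h]
    · simp [ascentSeqs, filter_singleton, hasc, hadj, h]
      tauto
  · rw [if_neg (by omega), zero_add]
    refine congrArg card (filter_congr fun l hl => ?_)
    have : l ≠ [] := List.ne_nil_of_length_pos (by rw [(mem_ascentSeqs.mp hl).1]; omega)
    simp [this]

theorem coeff_F (m : Fin 3 →₀ ℕ) {N : ℕ} (hN : m 0 ≤ N) :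
    coeff m F = coeff m (1 + H 0 (N + 1)) := by
  simp only [F_eq, coeff_ofCoeff3, card_filter_ascentSeqs, map_add, coeff_one, H, Z_zero, one_pow,
    mul_one, map_sum, G_eq, sum_ite_eq, mem_range, Nat.lt_succ_of_le hN, if_true,
    finsupp_eq_zero_iff]
  push_cast
  rfl

/-- `F = 1 + t(1−u)Δ₁⁻¹ + Σ_{n≥1} t(1−u)(1−ty)ⁿ(1+t−ty)ⁿ Γ₁⋯Γ_n Δ_n⁻¹Δ_{n+1}⁻¹`,
coefficientwise (the `n`-th summand is divisible by `u^n`, so the coefficient at a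
monomial with `u`-exponent `m 0` is captured by any partial sum with `N ≥ m 0`). -/
theorem stmt_9 (m : Fin 3 →₀ ℕ) (N : ℕ) (hN : m 0 ≤ N) :
    MvPowerSeries.coeff m F =
      MvPowerSeries.coeff m
        (1 + t * (1 - u) * (Δ 1)⁻¹ +
          ∑ n ∈ Finset.Icc 1 N,
            t * (1 - u) * (1 - t * y) ^ n * (1 + t - t * y) ^ n *
              (∏ i ∈ Finset.Icc 1 n, Γ i) * (Δ n)⁻¹ * (Δ (n + 1))⁻¹) := by
  have htrunc : coeff m (H 0 (N + 1) - S 0 (N + 1)) = 0 :=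
    X_pow_dvd_iff.mp (u_pow_dvd_H_sub_S (N + 1) 0) m (by omega)
  rw [map_sub, sub_eq_zero] at htrunc
  rw [coeff_F m hN, ← one_add_S_zero, map_add, map_add, htrunc]

end Stmt9
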